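/- Fix δ ∈ (0, 1/2). Let J be an interval, g : J → ℝ continuous with g > 0 on J, and h : J → ℝ Lipschitz with Lipschitz constant L ≥ 0. Let X, Y : [δ, 1−δ] → J be continuously differentiable with X′(t) = g(X(t)), Y′(t) = h(Y(t)) for all t, and X(δ) = Y(δ). Suppose a ≥ 0 is such that | ∫_{X(δ)}^{X(t)} (g(u) − h(u)) / g(u) du | ≤ a for all t ∈ [δ, 1−δ]. Then sup_{t ∈ [δ,1−δ]} |X(t) − Y(t)| ≤ a · e^{L(1−2δ)}. -/

import Mathlib

/-!
The substitution `u = X s` turns the relative error `∫_{X a}^{X t} (g - h) / g` into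
`ψ t = ∫_a^t (g - h) (X s) ds`, so `X - Y - ψ` has derivative `h ∘ X - h ∘ Y`, of size at most
`L |X - Y| ≤ L (|X - Y - ψ| + ε)`. Gronwall's inequality then bounds `|X - Y - ψ|` by
`ε (e^{L (t - a)} - 1)`, and adding back `|ψ| ≤ ε` gives `ε e^{L (t - a)}`.
-/

open MeasureTheory Set Real Topology
open scoped NNReal

theorem gronwallBound_zero_mul_eps (K ε x : ℝ) :
    gronwallBound 0 K (K * ε) x = ε * (exp (K * x) - 1) := by
  rcases eq_or_ne K 0 with rfl | hK
  · simp [gronwallBound_K0]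
  · rw [gronwallBound_of_K_ne_0 hK, mul_div_cancel_left₀ ε hK]
    ring

section
variable {a b : ℝ}

theorem HasDerivWithinAt.Ici_of_Icc {f : ℝ → ℝ} {f' t : ℝ} (hf : HasDerivWithinAt f f' (Icc a b) t)
    (ht : t ∈ Ico a b) : HasDerivWithinAt f f' (Ici t) t :=
  hf.mono_of_mem_nhdsWithin (Icc_mem_nhdsGE_of_mem ht)

theorem ContinuousOn.hasDerivWithinAt_primitive_Ici {f : ℝ → ℝ} (hf : ContinuousOn f (Icc a b))
    {t : ℝ} (ht : t ∈ Ico a b) :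
    HasDerivWithinAt (fun u => ∫ s in a..u, f s) (f t) (Ici t) t := by
  have hmem : Icc a b ∈ 𝓝[>] t := Icc_mem_nhdsGT_of_mem ht
  refine intervalIntegral.integral_hasDerivWithinAt_right ?_
    ⟨Icc a b, hmem, hf.aestronglyMeasurable measurableSet_Icc⟩
    ((hf t (Ico_subset_Icc_self ht)).mono_of_mem_nhdsWithin hmem)
  exact (hf.mono (by rw [uIcc_of_le ht.1]; exact Icc_subset_Icc_right ht.2.le)).intervalIntegrable

theorem ContinuousOn.continuousOn_primitive_Icc {f : ℝ → ℝ} (hf : ContinuousOn f (Icc a b)) :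
    ContinuousOn (fun u => ∫ s in a..u, f s) (Icc a b) := by
  rcases le_or_gt a b with hab | hba
  · simpa only [uIcc_of_le hab] using intervalIntegral.continuousOn_primitive_interval (μ := volume)
      (hf.integrableOn_Icc.mono_set (uIcc_of_le hab).subset)
  · simp [Icc_eq_empty_of_lt hba]

theorem integral_comp_eq_integral_mul_of_hasDerivWithinAt {X g φ : ℝ → ℝ} {J : Set ℝ} (hab : a ≤ b)
    (hX : ∀ s ∈ Icc a b, HasDerivWithinAt X (g (X s)) (Icc a b) s) (hXJ : MapsTo X (Icc a b) J)
    (hg : ContinuousOn g J) (hφ : ContinuousOn φ J) :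
    ∫ u in X a..X b, φ u = ∫ s in a..b, φ (X s) * g (X s) := by
  have hXc : ContinuousOn X (Icc a b) := fun s hs => (hX s hs).continuousWithinAt
  symm
  refine intervalIntegral.integral_comp_mul_deriv'' (f' := fun s => g (X s))
    (by rwa [uIcc_of_le hab]) (fun s hs => ?_) (by rw [uIcc_of_le hab]; exact hg.comp hXc hXJ)
    (hφ.mono (by rw [uIcc_of_le hab]; exact hXJ.image_subset))
  rw [min_eq_left hab, max_eq_right hab] at hs
  exact ((hX s (Ioo_subset_Icc_self hs)).Ici_of_Icc ⟨hs.1.le, hs.2⟩).Ioi_of_Ici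

theorem abs_le_mul_exp_of_hasDerivWithinAt_sub {D ψ F : ℝ → ℝ} {K ε : ℝ} (hK : 0 ≤ K)
    (hD : ContinuousOn D (Icc a b)) (hψ : ContinuousOn ψ (Icc a b)) (h0 : D a = ψ a)
    (hderiv : ∀ t ∈ Ico a b, HasDerivWithinAt (fun s => D s - ψ s) (F t) (Ici t) t)
    (hF : ∀ t ∈ Ico a b, |F t| ≤ K * |D t|) (hψε : ∀ t ∈ Icc a b, |ψ t| ≤ ε) :
    ∀ t ∈ Icc a b, |D t| ≤ ε * exp (K * (t - a)) := by
  have hgronwall := norm_le_gronwallBound_of_norm_deriv_right_le (hD.sub hψ) hderiv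
    (δ := 0) (by simp [h0]) (K := K) (ε := K * ε) fun t ht => calc
      |F t| ≤ K * |D t| := hF t ht
      _ ≤ K * (|ψ t| + |D t - ψ t|) := by gcongr; linarith [abs_sub_abs_le_abs_sub (D t) (ψ t)]
      _ ≤ K * |D t - ψ t| + K * ε := by nlinarith [hψε t (Ico_subset_Icc_self ht)]
  intro t ht
  calc |D t| ≤ |ψ t| + |D t - ψ t| := by linarith [abs_sub_abs_le_abs_sub (D t) (ψ t)]
    _ ≤ ε + ε * (exp (K * (t - a)) - 1) := by
        gcongr
        · exact hψε t ht
        · exact (hgronwall t ht).trans_eq (gronwallBound_zero_mul_eps K ε _)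
    _ = ε * exp (K * (t - a)) := by ring

theorem abs_sub_le_mul_exp_of_abs_integral_div_le {J : Set ℝ} {g h X Y : ℝ → ℝ} {K : ℝ≥0}
    {ε : ℝ} (hg : ContinuousOn g J) (hg0 : ∀ x ∈ J, g x ≠ 0) (hh : LipschitzOnWith K h J)
    (hXJ : MapsTo X (Icc a b) J) (hYJ : MapsTo Y (Icc a b) J)
    (hX : ∀ t ∈ Icc a b, HasDerivWithinAt X (g (X t)) (Icc a b) t)
    (hY : ∀ t ∈ Icc a b, HasDerivWithinAt Y (h (Y t)) (Icc a b) t) (h0 : X a = Y a)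
    (hε : ∀ t ∈ Icc a b, |∫ u in X a..X t, (g u - h u) / g u| ≤ ε) :
    ∀ t ∈ Icc a b, |X t - Y t| ≤ ε * exp (K * (t - a)) := by
  have hXc : ContinuousOn X (Icc a b) := fun t ht => (hX t ht).continuousWithinAt
  have hYc : ContinuousOn Y (Icc a b) := fun t ht => (hY t ht).continuousWithinAt
  set f := fun s => g (X s) - h (X s)
  have hf : ContinuousOn f (Icc a b) := (hg.sub hh.continuousOn).comp hXc hXJ
  have hsubst : ∀ t ∈ Icc a b, ∫ u in X a..X t, (g u - h u) / g u = ∫ s in a..t, f s := by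
    intro t ht
    have hsub : Icc a t ⊆ Icc a b := Icc_subset_Icc_right ht.2
    rw [integral_comp_eq_integral_mul_of_hasDerivWithinAt (φ := fun u => (g u - h u) / g u) ht.1
      (fun s hs => (hX s (hsub hs)).mono hsub) (hXJ.mono_left hsub) hg
      ((hg.sub hh.continuousOn).div hg hg0)]
    refine intervalIntegral.integral_congr fun s hs => ?_
    rw [uIcc_of_le ht.1] at hs
    exact div_mul_cancel₀ _ (hg0 _ (hXJ (hsub hs)))
  refine abs_le_mul_exp_of_hasDerivWithinAt_sub (D := fun t => X t - Y t)
    (F := fun t => h (X t) - h (Y t)) K.coe_nonneg (hXc.sub hYc)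
    hf.continuousOn_primitive_Icc (by simp [h0]) (fun t ht => ?_) (fun t ht => ?_)
    (fun t ht => hsubst t ht ▸ hε t ht)
  · refine ((((hX t (Ico_subset_Icc_self ht)).Ici_of_Icc ht).sub
      ((hY t (Ico_subset_Icc_self ht)).Ici_of_Icc ht)).sub
      (hf.hasDerivWithinAt_primitive_Ici ht)).congr_deriv ?_
    simp only [f]
    ring
  · simpa only [← Real.dist_eq] using
      hh.dist_le_mul _ (hXJ (Ico_subset_Icc_self ht)) _ (hYJ (Ico_subset_Icc_self ht))

end

theorem stmt_8_general
    (δ : ℝ)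
    (J : Set ℝ)
    (g h : ℝ → ℝ) (hg : ContinuousOn g J) (hgpos : ∀ x ∈ J, 0 < g x)
    (L : ℝ) (hL : 0 ≤ L)
    (hLip : ∀ x ∈ J, ∀ y ∈ J, |h x - h y| ≤ L * |x - y|)
    (X Y : ℝ → ℝ)
    (hXmap : ∀ t ∈ Icc δ (1 - δ), X t ∈ J) (hYmap : ∀ t ∈ Icc δ (1 - δ), Y t ∈ J)
    (hX : ∀ t ∈ Icc δ (1 - δ), HasDerivWithinAt X (g (X t)) (Icc δ (1 - δ)) t)
    (hY : ∀ t ∈ Icc δ (1 - δ), HasDerivWithinAt Y (h (Y t)) (Icc δ (1 - δ)) t)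
    (hinit : X δ = Y δ)
    (a : ℝ)
    (hbound : ∀ t ∈ Icc δ (1 - δ), |∫ u in (X δ)..(X t), (g u - h u) / g u| ≤ a) :
    ∀ t ∈ Icc δ (1 - δ), |X t - Y t| ≤ a * Real.exp (L * (1 - 2 * δ)) := by
  intro t ht
  have ha : 0 ≤ a := by simpa using hbound δ ⟨le_rfl, ht.1.trans ht.2⟩
  have hLip' : LipschitzOnWith L.toNNReal h J := .of_dist_le_mul fun x hx y hy => by
    simpa only [Real.dist_eq, Real.coe_toNNReal L hL] using hLip x hx y hy
  calc |X t - Y t| ≤ a * exp (L * (t - δ)) := by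
        simpa only [Real.coe_toNNReal L hL] using abs_sub_le_mul_exp_of_abs_integral_div_le hg
          (fun x hx => (hgpos x hx).ne') hLip' hXmap hYmap hX hY hinit hbound t ht
    _ ≤ a * exp (L * (1 - 2 * δ)) := by gcongr a * exp (L * ?_); linarith [ht.2]

/-- Lemma A.1 (path bound): if `X' = g ∘ X`, `Y' = h ∘ Y` with `X(δ) = Y(δ)`, `h` Lipschitz with
constant `L`, and the integrated relative error `|∫_{X(δ)}^{X(t)} (g-h)/g du| ≤ a` for all `t`,
then `sup_t |X(t) - Y(t)| ≤ a e^{L(1-2δ)}`. -/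
theorem stmt_8
    (δ : ℝ) (hδ : δ ∈ Ioo (0:ℝ) (1/2))
    (J : Set ℝ) (hJ : J.OrdConnected)
    (g h : ℝ → ℝ) (hg : ContinuousOn g J) (hgpos : ∀ x ∈ J, 0 < g x)
    (L : ℝ) (hL : 0 ≤ L)
    (hLip : ∀ x ∈ J, ∀ y ∈ J, |h x - h y| ≤ L * |x - y|)
    (X Y : ℝ → ℝ)
    (hXmap : ∀ t ∈ Icc δ (1 - δ), X t ∈ J) (hYmap : ∀ t ∈ Icc δ (1 - δ), Y t ∈ J)
    (hX : ∀ t ∈ Icc δ (1 - δ), HasDerivWithinAt X (g (X t)) (Icc δ (1 - δ)) t)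
    (hY : ∀ t ∈ Icc δ (1 - δ), HasDerivWithinAt Y (h (Y t)) (Icc δ (1 - δ)) t)
    (hinit : X δ = Y δ)
    (a : ℝ) (ha : 0 ≤ a)
    (hbound : ∀ t ∈ Icc δ (1 - δ), |∫ u in (X δ)..(X t), (g u - h u) / g u| ≤ a) :
    ∀ t ∈ Icc δ (1 - δ), |X t - Y t| ≤ a * Real.exp (L * (1 - 2 * δ)) :=
  stmt_8_general δ J g h hg hgpos L hL hLip X Y hXmap hYmap hX hY hinit a hbound
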